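/- For coprime positive integers a and b, the number 2b·gcd(3,b)·s(a;b) is an integer. -/

import Mathlib

open Finset Real

/-- The classical Dedekind sum `s(a;b)` defined by the cotangent sum. -/
noncomputable def dedekindS (a : ℤ) (b : ℕ) : ℝ :=
  (1 / (4 * (b : ℝ))) * ∑ ν ∈ Finset.Ico 1 b,
    Real.cot (Real.pi * a * ν / b) * Real.cot (Real.pi * ν / b)

/-
With `ζ = exp (2πi / b)` and `((x))` the sawtooth function,
`cot (πn / b) = 2i ∑_{ν<b} ((ν/b)) ζ^{nν}` for every integer `n`. Multiplying two such
expansions and summing over `k` with the orthogonality of `k ↦ ζ^{km}` gives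
`s(a;b) = ∑_{ν<b} ((ν/b)) ((aν/b))`. For coprime `a`, `b` and `r_ν = aν mod b` this reads
`2b² s(a;b) = 2 ∑ ν r_ν - b ∑ r_ν`, and `∑ ν r_ν ≡ a ∑ ν² = a (b - 1) b (2b - 1) / 6 (mod b)`
shows that `b ∣ 2 gcd(3, b) ∑ ν r_ν`.
-/

lemma sub_one_mul_sum_range_mul_pow_add {R : Type*} [CommRing R] (x : R) (n : ℕ) :
    (x - 1) * ∑ i ∈ range n, (i : R) * x ^ i + x * ∑ i ∈ range n, x ^ i = n * x ^ n := by
  induction n with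
  | zero => simp
  | succ n ih =>
    rw [sum_range_succ, sum_range_succ]
    push_cast
    linear_combination ih

lemma IsPrimitiveRoot.sum_range_zpow_mul {K : Type*} [Field K] {ζ : K} {b : ℕ}
    (hζ : IsPrimitiveRoot ζ b) (n : ℤ) :
    ∑ k ∈ range b, ζ ^ ((k : ℤ) * n) = if (b : ℤ) ∣ n then (b : K) else 0 := by
  simp_rw [mul_comm _ n, zpow_mul, zpow_natCast]
  split_ifs with h
  · simp [(hζ.zpow_eq_one_iff_dvd n).2 h]
  · rw [geom_sum_eq (mt (hζ.zpow_eq_one_iff_dvd n).1 h), ← zpow_natCast, ← zpow_mul, mul_comm,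
      zpow_mul, zpow_natCast, hζ.pow_eq_one, one_zpow, sub_self, zero_div]

noncomputable def sawtooth (x : ℝ) : ℝ := if Int.fract x = 0 then 0 else Int.fract x - 1 / 2

@[simp]
lemma sawtooth_zero : sawtooth 0 = 0 := by simp [sawtooth]

lemma sawtooth_neg (x : ℝ) : sawtooth (-x) = -sawtooth x := by
  by_cases h : Int.fract x = 0
  · simp [sawtooth, h, Int.fract_neg_eq_zero]
  · rw [sawtooth, sawtooth, if_neg (by rwa [Int.fract_neg_eq_zero]), if_neg h, Int.fract_neg h]
    ring

lemma sawtooth_add_intCast (x : ℝ) (m : ℤ) : sawtooth (x + m) = sawtooth x := by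
  simp only [sawtooth, Int.fract_add_intCast]

lemma sawtooth_of_pos_of_lt_one {x : ℝ} (h₀ : 0 < x) (h₁ : x < 1) : sawtooth x = x - 1 / 2 := by
  rw [sawtooth, Int.fract_eq_self.2 ⟨h₀.le, h₁⟩, if_neg h₀.ne']

section

variable {b : ℕ}

lemma sawtooth_emod_div (hb : 0 < b) (n : ℤ) :
    sawtooth ((n % b : ℤ) / b) = sawtooth (n / b) := by
  have hb' : (b : ℝ) ≠ 0 := by positivity
  have : (n : ℝ) / b = (n % b : ℤ) / b + (n / b : ℤ) := by
    rw [div_add' _ _ _ hb', ← Int.cast_natCast (R := ℝ) b, ← Int.cast_mul, ← Int.cast_add,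
      mul_comm, Int.emod_add_mul_ediv]
  rw [this, sawtooth_add_intCast]

lemma sawtooth_intCast_div_of_not_dvd (hb : 0 < b) {n : ℤ} (hn : ¬ (b : ℤ) ∣ n) :
    sawtooth (n / b) = (n % b : ℤ) / b - 1 / 2 := by
  have hb' : (0 : ℝ) < b := by exact_mod_cast hb
  have h₀ : 0 < n % b := lt_of_le_of_ne (Int.emod_nonneg _ (by omega))
    (Ne.symm (mt Int.dvd_of_emod_eq_zero hn))
  have h₁ : n % b < b := Int.emod_lt_of_pos _ (by omega)
  rw [← sawtooth_emod_div hb,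
    sawtooth_of_pos_of_lt_one (by positivity) ((div_lt_one hb').2 (by exact_mod_cast h₁))]

lemma sawtooth_natCast_div_of_lt {ν : ℕ} (h₀ : 0 < ν) (h₁ : ν < b) :
    sawtooth (ν / b) = ν / b - 1 / 2 :=
  have hb : (0 : ℝ) < b := by exact_mod_cast h₀.trans h₁
  sawtooth_of_pos_of_lt_one (by positivity) ((div_lt_one hb).2 (by exact_mod_cast h₁))

lemma sum_range_sawtooth_mul (hb : 0 < b) (f : ℕ → ℂ) :
    ∑ ν ∈ range b, (sawtooth (ν / b) : ℂ) * f ν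
      = ∑ ν ∈ range b, ((ν : ℂ) / b - 1 / 2) * f ν + f 0 / 2 := by
  obtain ⟨n, rfl⟩ := Nat.exists_eq_succ_of_ne_zero hb.ne'
  rw [sum_range_succ', sum_range_succ', add_assoc]
  congr 1
  · refine sum_congr rfl fun i hi => ?_
    rw [sawtooth_natCast_div_of_lt i.succ_pos (by simpa using hi)]
    push_cast; ring
  · simp; ring

lemma sum_range_sawtooth (hb : 0 < b) : ∑ ν ∈ range b, sawtooth (ν / b) = 0 := by
  have hgauss : (∑ ν ∈ range b, (ν : ℂ)) * 2 = b * (b - 1) := by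
    obtain ⟨n, rfl⟩ := Nat.exists_eq_add_one_of_ne_zero hb.ne'
    have hnat := sum_range_id_mul_two (n + 1)
    rw [Nat.add_sub_cancel] at hnat
    have hcast := congrArg (Nat.cast : ℕ → ℂ) hnat
    push_cast at hcast ⊢
    linear_combination hcast
  have hsplit := sum_range_sawtooth_mul hb (fun _ => 1)
  simp only [mul_one] at hsplit
  have hb' : (b : ℂ) ≠ 0 := by exact_mod_cast hb.ne'
  apply Complex.ofReal_injective
  push_cast
  rw [hsplit, sum_sub_distrib, ← sum_div, sum_const, card_range, nsmul_eq_mul]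
  field_simp
  linear_combination hgauss

lemma sum_range_ite_dvd_add {M : Type*} [AddCommMonoid M] (hb : 0 < b) (c : ℤ) (f : ℤ → M) :
    ∑ μ ∈ range b, (if (b : ℤ) ∣ c + μ then f μ else 0) = f ((-c) % b) := by
  have h₀ : 0 ≤ (-c) % b := Int.emod_nonneg _ (by omega)
  have h₁ : (-c) % b < b := Int.emod_lt_of_pos _ (by omega)
  have hsel : ∀ μ ∈ range b, (b : ℤ) ∣ c + μ ↔ μ = ((-c) % b).toNat := by
    intro μ hμ
    rw [mem_range] at hμ
    rw [show c + μ = μ - -c by ring, ← Int.modEq_iff_dvd, Int.ModEq,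
      Int.emod_eq_of_lt (a := μ) (by omega) (by omega)]
    omega
  rw [sum_congr rfl fun μ hμ => by rw [if_congr (hsel μ hμ) rfl rfl], sum_ite_eq',
    if_pos (mem_range.2 (by omega)), Int.toNat_of_nonneg h₀]

-- At `x = 1` the right-hand side is `2 / 0 = 0`, in agreement with `sum_range_sawtooth`.
lemma sum_range_sawtooth_mul_pow (hb : 0 < b) {x : ℂ} (hx : x ^ b = 1) :
    ∑ ν ∈ range b, (sawtooth (ν / b) : ℂ) * x ^ ν = (x + 1) / (2 * (x - 1)) := by
  rcases eq_or_ne x 1 with rfl | hx₁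
  · simp only [one_pow, mul_one, sub_self, mul_zero, div_zero]
    exact_mod_cast sum_range_sawtooth hb
  have hb' : (b : ℂ) ≠ 0 := by exact_mod_cast hb.ne'
  have hx₁' : x - 1 ≠ 0 := sub_ne_zero.2 hx₁
  have hgeom : ∑ ν ∈ range b, x ^ ν = 0 := by rw [geom_sum_eq hx₁, hx, sub_self, zero_div]
  have hmul := sub_one_mul_sum_range_mul_pow_add x b
  rw [hgeom, hx, mul_zero, add_zero, mul_one] at hmul
  rw [sum_range_sawtooth_mul hb]
  simp_rw [sub_mul, sum_sub_distrib, div_mul_eq_mul_div, ← sum_div, ← mul_sum, hgeom]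
  field_simp
  linear_combination 2 * hmul

lemma cot_pi_mul_div_eq_sum_sawtooth (hb : 0 < b) (n : ℤ) :
    (Real.cot (π * n / b) : ℂ) = 2 * Complex.I *
      ∑ ν ∈ range b, (sawtooth (ν / b) : ℂ) * Complex.exp (2 * π * Complex.I / b) ^ (n * ν) := by
  set ζ := Complex.exp (2 * π * Complex.I / b)
  have hζ : IsPrimitiveRoot ζ b := Complex.isPrimitiveRoot_exp b hb.ne'
  have hζn : (ζ ^ n) ^ b = 1 := by
    rw [← zpow_natCast, ← zpow_mul, mul_comm, zpow_mul, zpow_natCast, hζ.pow_eq_one, one_zpow]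
  have hexp : Complex.exp (2 * π * Complex.I * (n / b)) = ζ ^ n := by
    rw [← Complex.exp_int_mul]; congr 1; ring
  simp_rw [zpow_mul, zpow_natCast]
  rw [sum_range_sawtooth_mul_pow hb hζn, Complex.ofReal_cot,
    show ((π * n / b : ℝ) : ℂ) = π * ((n : ℂ) / b) by push_cast; ring,
    Complex.cot_pi_eq_exp_ratio, hexp, div_eq_mul_inv, div_eq_mul_inv, mul_inv, mul_inv,
    Complex.inv_I, ← neg_sub (ζ ^ n) 1, inv_neg]
  ring

lemma sum_range_cot_mul_cot (hb : 0 < b) (a : ℤ) :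
    ∑ k ∈ range b, Real.cot (π * a * k / b) * Real.cot (π * k / b)
      = 4 * b * ∑ ν ∈ range b, sawtooth (ν / b) * sawtooth (a * ν / b) := by
  set ζ := Complex.exp (2 * π * Complex.I / b)
  have hζ : IsPrimitiveRoot ζ b := Complex.isPrimitiveRoot_exp b hb.ne'
  have hζ₀ : ζ ≠ 0 := Complex.exp_ne_zero _
  have hcot : ∀ k : ℕ, (Real.cot (π * a * k / b) : ℂ) * Real.cot (π * k / b)
      = -4 * ∑ ν ∈ range b, ∑ μ ∈ range b, (sawtooth (ν / b) : ℂ) * sawtooth (μ / b)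
          * ζ ^ ((k : ℤ) * (a * ν + μ)) := by
    intro k
    rw [show π * a * k / b = π * ((a * k : ℤ) : ℝ) / b by push_cast; ring,
      show π * k / b = π * ((k : ℤ) : ℝ) / b by push_cast; ring,
      cot_pi_mul_div_eq_sum_sawtooth hb, cot_pi_mul_div_eq_sum_sawtooth hb,
      mul_mul_mul_comm, sum_mul_sum]
    have hI : 2 * Complex.I * (2 * Complex.I) = -4 := by linear_combination 4 * Complex.I_sq
    rw [hI]
    refine congrArg _ (sum_congr rfl fun ν _ => sum_congr rfl fun μ _ => ?_)
    rw [mul_mul_mul_comm, ← zpow_add₀ hζ₀]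
    ring_nf
  apply Complex.ofReal_injective
  push_cast [-Complex.ofReal_cot]
  calc ∑ k ∈ range b, (Real.cot (π * a * k / b) : ℂ) * Real.cot (π * k / b)
      = -4 * ∑ ν ∈ range b, ∑ μ ∈ range b, (sawtooth (ν / b) : ℂ) * sawtooth (μ / b)
          * ∑ k ∈ range b, ζ ^ ((k : ℤ) * (a * ν + μ)) := by
        rw [sum_congr rfl fun k _ => hcot k, ← mul_sum, sum_comm]
        refine congrArg _ (sum_congr rfl fun ν _ => ?_)
        rw [sum_comm]
        simp_rw [mul_sum]
    _ = -4 * ∑ ν ∈ range b, ∑ μ ∈ range b, if (b : ℤ) ∣ a * ν + μ then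
          (sawtooth (ν / b) : ℂ) * sawtooth ((μ : ℤ) / b) * b else 0 := by
        simp_rw [hζ.sum_range_zpow_mul, mul_ite, mul_zero, Int.cast_natCast]
    _ = -4 * ∑ ν ∈ range b, (sawtooth (ν / b) : ℂ) * sawtooth ((-(a * ν) % b : ℤ) / b) * b := by
        congr 1
        refine sum_congr rfl fun ν _ => ?_
        exact sum_range_ite_dvd_add hb _
          (fun m : ℤ => (sawtooth (ν / b) : ℂ) * sawtooth (m / b) * b)
    _ = 4 * b * ∑ ν ∈ range b, (sawtooth (ν / b) : ℂ) * sawtooth (a * ν / b) := by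
        simp_rw [sawtooth_emod_div hb, Int.cast_neg, neg_div, sawtooth_neg, mul_sum]
        refine sum_congr rfl fun ν _ => ?_
        push_cast
        ring

lemma dedekindS_eq_sum_sawtooth (a : ℤ) (hb : 0 < b) :
    dedekindS a b = ∑ ν ∈ range b, sawtooth (ν / b) * sawtooth (a * ν / b) := by
  have hIco : ∑ ν ∈ Ico 1 b, Real.cot (π * a * ν / b) * Real.cot (π * ν / b)
      = ∑ ν ∈ range b, Real.cot (π * a * ν / b) * Real.cot (π * ν / b) := by
    rw [range_eq_Ico, sum_eq_sum_Ico_succ_bot hb]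
    simp [Real.cot_eq_cos_div_sin] -- the added term is `cot 0 * cot 0 = 0`
  rw [dedekindS, hIco, sum_range_cot_mul_cot hb, one_div,
    inv_mul_cancel_left₀ (by positivity)]

lemma two_mul_sq_mul_sum_sawtooth {a : ℤ} (hb : 0 < b) (hab : IsCoprime a b) :
    2 * b ^ 2 * ∑ ν ∈ range b, sawtooth (ν / b) * sawtooth (a * ν / b)
      = ((2 * ∑ ν ∈ range b, ν * (a * ν % b) - b * ∑ ν ∈ range b, (a * ν % b) : ℤ) : ℝ) := by
  have hb' : (b : ℝ) ≠ 0 := by exact_mod_cast hb.ne'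
  have hterm : ∀ ν ∈ range b, 2 * b ^ 2 * (sawtooth (ν / b) * sawtooth (a * ν / b))
      = 2 * ν * ((a * ν % b : ℤ) : ℝ) - b * ((a * ν % b : ℤ) : ℝ) - b ^ 2 * sawtooth (ν / b) := by
    intro ν hν
    rcases Nat.eq_zero_or_pos ν with rfl | hν₀
    · simp
    have hν₁ : ν < b := mem_range.1 hν
    have hndvd : ¬ (b : ℤ) ∣ a * ν := fun h =>
      absurd (Int.le_of_dvd (by omega) (hab.symm.dvd_of_dvd_mul_left h)) (by omega)
    have hsaw := sawtooth_intCast_div_of_not_dvd hb hndvd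
    push_cast at hsaw
    rw [hsaw, sawtooth_natCast_div_of_lt hν₀ hν₁]
    field_simp
  rw [mul_sum, sum_congr rfl hterm]
  push_cast
  simp only [sum_sub_distrib, ← mul_sum, sum_range_sawtooth hb, mul_assoc]
  ring

end

lemma six_mul_sum_range_sq (n : ℕ) :
    6 * ∑ i ∈ range n, (i : ℤ) ^ 2 = (n - 1) * n * (2 * n - 1) := by
  induction n with
  | zero => simp
  | succ n ih =>
    rw [sum_range_succ]
    push_cast
    linear_combination ih

lemma three_dvd_gcd_three_mul (b : ℕ) : (3 : ℤ) ∣ Nat.gcd 3 b * ((b - 1) * (2 * b - 1)) := by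
  by_cases h : 3 ∣ b
  · rw [Nat.gcd_eq_left h]
    exact dvd_mul_right _ _
  · apply Dvd.dvd.mul_left
    rcases (by omega : b % 3 = 1 ∨ b % 3 = 2) with hb3 | hb3
    · exact Dvd.dvd.mul_right (by omega) _
    · exact Dvd.dvd.mul_left (by omega) _

lemma dvd_two_mul_gcd_three_mul_sum (a : ℤ) (b : ℕ) :
    (b : ℤ) ∣ 2 * Nat.gcd 3 b * ∑ ν ∈ range b, ν * (a * ν % b) := by
  have hmod : ∑ ν ∈ range b, ν * (a * ν % b) ≡ a * ∑ ν ∈ range b, (ν : ℤ) ^ 2 [ZMOD b] := by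
    rw [mul_sum]
    refine Int.ModEq.sum fun ν _ => ?_
    rw [show a * (ν : ℤ) ^ 2 = ν * (a * ν) by ring]
    exact (Int.mod_modEq _ _).mul_left _
  obtain ⟨t, ht⟩ := three_dvd_gcd_three_mul b
  have hsq : 2 * Nat.gcd 3 b * (a * ∑ ν ∈ range b, (ν : ℤ) ^ 2) = b * (a * t) := by
    have := six_mul_sum_range_sq b
    apply mul_left_cancel₀ (show (6 : ℤ) ≠ 0 by norm_num)
    linear_combination 2 * a * (Nat.gcd 3 b : ℤ) * this + 2 * a * (b : ℤ) * ht
  obtain ⟨s, hs⟩ := hmod.dvd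
  exact ⟨a * t - 2 * Nat.gcd 3 b * s, by linear_combination hsq - 2 * (Nat.gcd 3 b : ℤ) * hs⟩

theorem dedekindS_denominator (a b : ℕ) (hb : 0 < b) (hcop : Nat.gcd a b = 1) :
    ∃ z : ℤ, (2 * (b : ℝ) * (Nat.gcd 3 b : ℝ)) * dedekindS a b = (z : ℝ) := by
  obtain ⟨w, hw⟩ := dvd_two_mul_gcd_three_mul_sum a b
  refine ⟨w - Nat.gcd 3 b * ∑ ν ∈ range b, (a * ν % b : ℤ), ?_⟩
  have hsaw := two_mul_sq_mul_sum_sawtooth hb (Nat.isCoprime_iff_coprime.2 hcop)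
  have hw' := congrArg (Int.cast : ℤ → ℝ) hw
  push_cast at hsaw hw' ⊢
  rw [dedekindS_eq_sum_sawtooth _ hb]
  apply mul_left_cancel₀ (show (b : ℝ) ≠ 0 by exact_mod_cast hb.ne')
  linear_combination (Nat.gcd 3 b : ℝ) * hsaw + hw'
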